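/- Let X and Θ be real Banach spaces, let G : X → Θ, S : Θ → X and V : Θ → X be bounded linear operators, and let A, B > 0 with A‖f‖ ≤ ‖G f‖ ≤ B‖f‖ for all f ∈ X and V(G f) = f for all f ∈ X. Let λ₁, λ₂, μ ≥ 0 satisfy λ₂ < 1 and λ₁ + μ·B < 1, and assume ‖S c − V c‖ ≤ λ₁‖V c‖ + λ₂‖S c‖ + μ‖c‖ for all c ∈ Θ. Then the operator L := S ∘ G : X → X is bijective, S(G(L⁻¹ f)) = f for all f ∈ X, and for all f ∈ X one has (A·(1 − λ₂)/(1 + λ₁ + μB))·‖f‖ ≤ ‖G(L⁻¹ f)‖ ≤ (B·(1 + λ₂)/(1 − (λ₁ + μB)))·‖f‖. -/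

import Mathlib

/-! The composite `L = S ∘ G` satisfies the Casazza–Christensen condition
`‖L f - f‖ ≤ (λ₁ + μB)‖f‖ + λ₂‖L f‖`. Along the segment `1 + t (L - 1)` the same kind of
inequality holds with constants at most `max (λ₁ + μB) λ₂ < 1`, so all operators of the segment
are bounded below by one constant `c > 0`. An invertible operator bounded below by `c` has
`‖u⁻¹‖ ≤ c⁻¹`, so every operator within distance `c` of it is invertible; finitely many steps
carry invertibility from `1` to `L`. The frame bounds then follow from the triangle inequality
applied to `f = L g`. -/

open Set

section Perturbation

theorem mul_norm_le_of_norm_sub_le {E : Type*} [SeminormedAddCommGroup E] {f g : E} {a b : ℝ}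
    (h : ‖g - f‖ ≤ a * ‖f‖ + b * ‖g‖) :
    (1 - a) * ‖f‖ ≤ (1 + b) * ‖g‖ ∧ (1 - b) * ‖g‖ ≤ (1 + a) * ‖f‖ := by
  have hf : ‖f‖ ≤ ‖g‖ + ‖g - f‖ := norm_le_insert' f g |>.trans_eq (by rw [norm_sub_rev])
  have hg : ‖g‖ ≤ ‖f‖ + ‖g - f‖ := norm_le_insert' g f
  constructor <;> linarith

variable {E : Type*} [NormedAddCommGroup E] [NormedSpace ℝ E]

theorem norm_add_smul_sub_le {f y : E} {k l t : ℝ} (hl : 0 ≤ l) (ht₀ : 0 ≤ t) (ht₁ : t ≤ 1)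
    (h : ‖y - f‖ ≤ k * ‖f‖ + l * ‖y‖) :
    ‖f + t • (y - f) - f‖ ≤ (t * k + (1 - t) * l) * ‖f‖ + l * ‖f + t • (y - f)‖ := by
  have hy : t * ‖y‖ ≤ ‖f + t • (y - f)‖ + (1 - t) * ‖f‖ := by
    have hdecomp : t • y = f + t • (y - f) - (1 - t) • f := by
      rw [smul_sub, sub_smul, one_smul]
      abel
    rw [← norm_smul_of_nonneg ht₀, ← norm_smul_of_nonneg (sub_nonneg.2 ht₁), hdecomp]
    exact norm_sub_le _ _
  rw [add_sub_cancel_left, norm_smul_of_nonneg ht₀]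
  nlinarith [mul_le_mul_of_nonneg_left h ht₀, mul_le_mul_of_nonneg_left hy hl]

variable [CompleteSpace E]

theorem isUnit_of_norm_sub_lt_of_bounded_below {u v : E →L[ℝ] E} (hu : IsUnit u) {c : ℝ}
    (hc : 0 < c) (hbelow : ∀ f, c * ‖f‖ ≤ ‖u f‖) (huv : ‖v - u‖ < c) : IsUnit v := by
  nontriviality E
  obtain ⟨u, rfl⟩ := hu
  have hinv : ‖(↑u⁻¹ : E →L[ℝ] E)‖ ≤ c⁻¹ := by
    refine ContinuousLinearMap.opNorm_le_bound _ (inv_nonneg.2 hc.le) fun y ↦ ?_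
    have := hbelow ((↑u⁻¹ : E →L[ℝ] E) y)
    rw [← mul_apply_eq_comp, Units.mul_inv, one_apply_eq_self] at this
    rw [inv_mul_eq_div, le_div_iff₀ hc]
    linarith
  have hlt : ‖v - u‖ < ‖(↑u⁻¹ : E →L[ℝ] E)‖⁻¹ :=
    huv.trans_le ((le_inv_comm₀ hc (Units.norm_pos _)).2 hinv)
  exact (u.ofNearby v hlt).isUnit

theorem isUnit_of_segment_bounded_below {P Q : E →L[ℝ] E} (hP : IsUnit P) {c : ℝ} (hc : 0 < c)
    (hbelow : ∀ t ∈ Icc (0 : ℝ) 1, ∀ f, c * ‖f‖ ≤ ‖(P + t • (Q - P)) f‖) : IsUnit Q := by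
  obtain ⟨N, hN⟩ := exists_nat_gt (‖Q - P‖ / c)
  have hN₀ : (0 : ℝ) < N := (div_nonneg (norm_nonneg _) hc.le).trans_lt hN
  have hstep : ∀ k ≤ N, IsUnit (P + ((k : ℝ) / N) • (Q - P)) := by
    intro k
    induction k with
    | zero => simpa using hP
    | succ k ih =>
      intro hk
      have hk' : (k : ℝ) + 1 ≤ N := by exact_mod_cast hk
      refine isUnit_of_norm_sub_lt_of_bounded_below (ih (by omega)) hc
        (hbelow _ ⟨by positivity, (div_le_one hN₀).2 (by linarith)⟩) ?_
      have hgap : ((k + 1 : ℕ) : ℝ) / N - k / N = 1 / N := by push_cast; ring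
      rw [add_sub_add_left_eq_sub, ← sub_smul, norm_smul, hgap, Real.norm_of_nonneg (by positivity),
        one_div_mul_eq_div, div_lt_iff₀ hN₀, mul_comm]
      exact (div_lt_iff₀ hc).1 hN
  simpa [hN₀.ne'] using hstep N le_rfl

theorem isUnit_of_norm_apply_sub_le {L : E →L[ℝ] E} {k l : ℝ} (hl₀ : 0 ≤ l) (hk : k < 1)
    (hl : l < 1) (h : ∀ f, ‖L f - f‖ ≤ k * ‖f‖ + l * ‖L f‖) : IsUnit L := by
  have hm : max k l < 1 := max_lt hk hl
  refine isUnit_of_segment_bounded_below isUnit_one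
    (div_pos (sub_pos.2 hm) (by linarith : 0 < 1 + l)) fun t ⟨ht₀, ht₁⟩ f ↦ ?_
  have hconv : t * k + (1 - t) * l ≤ max k l := by
    nlinarith [le_max_left k l, le_max_right k l]
  have hpath := (norm_add_smul_sub_le hl₀ ht₀ ht₁ (h f)).trans
    (add_le_add_left (mul_le_mul_of_nonneg_right hconv (norm_nonneg f)) _)
  have happ : (1 + t • (L - 1)) f = f + t • (L f - f) := rfl
  rw [happ, div_mul_eq_mul_div, div_le_iff₀ (by linarith)]
  linarith [(mul_norm_le_of_norm_sub_le hpath).1]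

end Perturbation

/-- Perturbation of the reconstruction operator (single-seminorm instance):
if `G` is the analysis operator of a frame with bounds `A, B` and reconstruction
operator `V`, and `S` is a perturbed reconstruction operator, then `L := S ∘ G`
is bijective and the family with analysis operator `G ∘ L⁻¹` is a frame with
reconstruction operator `S` and the stated bounds. -/
theorem reconstruction_perturbation
    {X Θ : Type*} [NormedAddCommGroup X] [NormedSpace ℝ X] [CompleteSpace X]
    [NormedAddCommGroup Θ] [NormedSpace ℝ Θ] [CompleteSpace Θ]
    (G : X →L[ℝ] Θ) (S V : Θ →L[ℝ] X) (A B : ℝ) (hA : 0 < A) (hB : 0 < B)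
    (hG : ∀ f : X, A * ‖f‖ ≤ ‖G f‖ ∧ ‖G f‖ ≤ B * ‖f‖)
    (hV : ∀ f : X, V (G f) = f)
    (lam1 lam2 mu : ℝ) (hlam1 : 0 ≤ lam1) (hlam2 : 0 ≤ lam2) (hmu : 0 ≤ mu)
    (hlam2' : lam2 < 1) (hmain : lam1 + mu * B < 1)
    (hpert : ∀ c : Θ, ‖S c - V c‖ ≤ lam1 * ‖V c‖ + lam2 * ‖S c‖ + mu * ‖c‖) :
    Function.Bijective ⇑(S.comp G) ∧
    (∀ f : X, S (G (Function.invFun ⇑(S.comp G) f)) = f) ∧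
    ∀ f : X,
      A * (1 - lam2) / (1 + lam1 + mu * B) * ‖f‖ ≤
        ‖G (Function.invFun ⇑(S.comp G) f)‖ ∧
      ‖G (Function.invFun ⇑(S.comp G) f)‖ ≤
        B * (1 + lam2) / (1 - (lam1 + mu * B)) * ‖f‖ := by
  have hSG : ∀ f, ‖S.comp G f - f‖ ≤ (lam1 + mu * B) * ‖f‖ + lam2 * ‖S.comp G f‖ := fun f ↦ by
    have hc := hpert (G f)
    rw [hV] at hc
    rw [ContinuousLinearMap.comp_apply]
    linarith [mul_le_mul_of_nonneg_left (hG f).2 hmu]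
  obtain ⟨u, hu⟩ := isUnit_of_norm_apply_sub_le hlam2 hmain hlam2' hSG
  have hbij : Function.Bijective (S.comp G) := by
    rw [← hu]
    exact (ContinuousLinearEquiv.unitsEquiv ℝ X u).bijective
  have hinv := Function.rightInverse_invFun hbij.2
  refine ⟨hbij, hinv, fun f ↦ ?_⟩
  set g := Function.invFun (S.comp G) f
  have hden : 0 < 1 + lam1 + mu * B := by positivity
  obtain ⟨hlow, hup⟩ := mul_norm_le_of_norm_sub_le (hinv f ▸ hSG g)
  constructor
  · calc A * (1 - lam2) / (1 + lam1 + mu * B) * ‖f‖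
        = A * ((1 - lam2) * ‖f‖ / (1 + lam1 + mu * B)) := by ring
      _ ≤ A * ‖g‖ := by
        gcongr
        rw [div_le_iff₀ hden]
        linarith
      _ ≤ ‖G g‖ := (hG g).1
  · calc ‖G g‖ ≤ B * ‖g‖ := (hG g).2
      _ ≤ B * ((1 + lam2) * ‖f‖ / (1 - (lam1 + mu * B))) := by
        gcongr
        rw [le_div_iff₀ (sub_pos.2 hmain)]
        linarith
      _ = B * (1 + lam2) / (1 - (lam1 + mu * B)) * ‖f‖ := by ring
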